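/- For every integer n ≥ 2 there exists a constant C = C(n) > 0 such that: for every continuous function F : [-1,0] → ℝ, ∫_{-1}^{0} (-z)^{2(n-1) - 1/2} ( dⁿ/dzⁿ [ (z+1)^{-2} ∫_{-1}^{z} F(z') (z - z')^{n+1} dz' ] )² dz ≤ C ∫_{-1}^{0} (-z)^{2(n+1) - 1/2} F(z)² dz. -/

import Mathlib

set_option maxHeartbeats 1000000

open MeasureTheory Set
open scoped ENNReal

theorem schur_test {k : ℝ → ℝ → ℝ≥0∞} (hk : Measurable (Function.uncurry k))
    {h : ℝ → ℝ≥0∞} (hh : Measurable h) (hpos : ∀ x, h x ≠ 0) (hfin : ∀ x, h x ≠ ∞)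
    {A : ℝ≥0∞} (hA : A ≠ ∞)
    (h1 : ∀ z, ∫⁻ t, k z t * h t ≤ A * h z)
    (h2 : ∀ t, ∫⁻ z, k z t * h z ≤ A * h t)
    {f : ℝ → ℝ≥0∞} (hf : AEMeasurable f) :
    ∫⁻ z, (∫⁻ t, k z t * f t) ^ 2 ≤ A ^ 2 * ∫⁻ t, f t ^ 2 := by
  have hconj : Real.HolderConjugate 2 2 := ⟨by norm_num, by norm_num, by norm_num⟩
  have half_sq : ∀ x : ℝ≥0∞, (x ^ (1/2 : ℝ)) ^ (2 : ℝ) = x := by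
    intro x; rw [← ENNReal.rpow_mul]; norm_num
  have hCS : ∀ z, (∫⁻ t, k z t * f t) ^ 2 ≤ (A * h z) * ∫⁻ t, k z t * f t ^ 2 * (h t)⁻¹ := by
    intro z
    have hkz : Measurable (k z) := hk.comp measurable_prodMk_left
    set u : ℝ → ℝ≥0∞ := fun t => (k z t * h t) ^ (1/2 : ℝ) with hu_def
    set v : ℝ → ℝ≥0∞ := fun t => (k z t * f t ^ 2 * (h t)⁻¹) ^ (1/2 : ℝ) with hv_def
    have huv : ∀ t, k z t * f t = u t * v t := by
      intro t
      rw [hu_def, hv_def]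
      simp only
      rw [← ENNReal.mul_rpow_of_nonneg _ _ (by norm_num : (0:ℝ) ≤ 1/2)]
      have e : k z t * h t * (k z t * f t ^ 2 * (h t)⁻¹)
          = (k z t * f t) ^ 2 * (h t * (h t)⁻¹) := by ring
      rw [e, ENNReal.mul_inv_cancel (hpos t) (hfin t), mul_one,
        ← ENNReal.rpow_natCast (k z t * f t) 2, ← ENNReal.rpow_mul]
      norm_num
    have hu : AEMeasurable u := ((hkz.mul hh).pow_const _).aemeasurable
    have hv : AEMeasurable v :=
      (((hkz.aemeasurable.mul (hf.pow_const 2)).mul hh.inv.aemeasurable).pow_const _)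
    have hHolder := ENNReal.lintegral_mul_le_Lp_mul_Lq volume hconj hu hv
    have hsq : (∫⁻ t, k z t * f t) ≤
        (∫⁻ t, u t ^ (2:ℝ)) ^ (1/2 : ℝ) * (∫⁻ t, v t ^ (2:ℝ)) ^ (1/2 : ℝ) := by
      calc (∫⁻ t, k z t * f t) = ∫⁻ t, (u * v) t := by
            simp only [Pi.mul_apply]; exact lintegral_congr huv
        _ ≤ _ := hHolder
    have hu2 : (∫⁻ t, u t ^ (2:ℝ)) = ∫⁻ t, k z t * h t := by
      apply lintegral_congr; intro t; exact half_sq _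
    have hv2 : (∫⁻ t, v t ^ (2:ℝ)) = ∫⁻ t, k z t * f t ^ 2 * (h t)⁻¹ := by
      apply lintegral_congr; intro t; exact half_sq _
    calc (∫⁻ t, k z t * f t) ^ 2
        ≤ ((∫⁻ t, u t ^ (2:ℝ)) ^ (1/2 : ℝ) * (∫⁻ t, v t ^ (2:ℝ)) ^ (1/2 : ℝ)) ^ 2 :=
          pow_le_pow_left' hsq 2
      _ = (∫⁻ t, u t ^ (2:ℝ)) * (∫⁻ t, v t ^ (2:ℝ)) := by
          rw [mul_pow, ← ENNReal.rpow_natCast (_ ^ (1/2:ℝ)) 2, ← ENNReal.rpow_mul,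
            ← ENNReal.rpow_natCast ((∫⁻ t, v t ^ (2:ℝ)) ^ (1/2:ℝ)) 2, ← ENNReal.rpow_mul]
          norm_num
      _ ≤ (A * h z) * ∫⁻ t, k z t * f t ^ 2 * (h t)⁻¹ := by
          rw [hu2, hv2]; exact mul_le_mul' (h1 z) le_rfl
  calc ∫⁻ z, (∫⁻ t, k z t * f t) ^ 2
      ≤ ∫⁻ z, (A * h z) * ∫⁻ t, k z t * f t ^ 2 * (h t)⁻¹ := lintegral_mono hCS
    _ = A * ∫⁻ z, ∫⁻ t, h z * (k z t * f t ^ 2 * (h t)⁻¹) := by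
        rw [← lintegral_const_mul' _ _ hA]
        apply lintegral_congr; intro z
        rw [mul_assoc, ← lintegral_const_mul' (h z) _ (hfin z)]
    _ = A * ∫⁻ t, ∫⁻ z, h z * (k z t * f t ^ 2 * (h t)⁻¹) := by
        congr 1
        apply lintegral_lintegral_swap
        exact ((hh.comp measurable_fst).aemeasurable.mul
          (((hk.aemeasurable.mul (hf.comp_snd.pow_const 2)).mul
            ((hh.comp measurable_snd).inv.aemeasurable))))
    _ ≤ A * ∫⁻ t, A * f t ^ 2 := by
        apply mul_le_mul' le_rfl
        apply lintegral_mono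
        intro t
        have e : ∀ z, h z * (k z t * f t ^ 2 * (h t)⁻¹)
            = (f t ^ 2 * (h t)⁻¹) * (k z t * h z) := by intro z; ring
        calc (∫⁻ z, h z * (k z t * f t ^ 2 * (h t)⁻¹))
            = (f t ^ 2 * (h t)⁻¹) * ∫⁻ z, k z t * h z := by
              have hm : Measurable fun z => k z t * h z := by
                exact (hk.comp measurable_prodMk_right).mul hh
              rw [← lintegral_const_mul _ hm]
              exact lintegral_congr e
          _ ≤ (f t ^ 2 * (h t)⁻¹) * (A * h t) := mul_le_mul' le_rfl (h2 t)
          _ = A * f t ^ 2 := by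
              rw [mul_comm A (h t), ← mul_assoc, mul_assoc (f t ^2), ENNReal.inv_mul_cancel (hpos t) (hfin t), mul_one, mul_comm]
    _ = A ^ 2 * ∫⁻ t, f t ^ 2 := by rw [lintegral_const_mul' _ _ hA, ← mul_assoc, sq]

noncomputable def Jf (F : ℝ → ℝ) (m : ℕ) (z : ℝ) : ℝ := ∫ t in (-1 : ℝ)..z, F t * (z - t) ^ m

noncomputable def Mf (F : ℝ → ℝ) (r : ℕ) (z : ℝ) : ℝ := ∫ t in (-1 : ℝ)..z, F t * (-t) ^ r

variable {F : ℝ → ℝ}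

lemma contOn_mul_pow (hF : ContinuousOn F (Icc (-1) 0)) {w : ℝ} (hw : w ∈ Icc (-1:ℝ) 0)
    (g : ℝ → ℝ) (hg : Continuous g) :
    IntervalIntegrable (fun t => F t * g t) volume (-1) w := by
  apply ContinuousOn.intervalIntegrable
  have huIcc : uIcc (-1 : ℝ) w = Icc (-1) w := uIcc_of_le hw.1
  rw [huIcc]
  exact (hF.mono (Icc_subset_Icc le_rfl hw.2)).mul (hg.continuousOn)

lemma hasDerivAt_Mf (hF : ContinuousOn F (Icc (-1) 0)) {z : ℝ} (hz : z ∈ Ioo (-1:ℝ) 0) (r : ℕ) :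
    HasDerivAt (Mf F r) (F z * (-z) ^ r) z := by
  have hz' : z ∈ Icc (-1:ℝ) 0 := Ioo_subset_Icc_self hz
  have hFc : ContinuousOn (fun t => F t * (-t) ^ r) (Ioo (-1:ℝ) 0) :=
    (hF.mono Ioo_subset_Icc_self).mul ((continuous_neg.pow r).continuousOn)
  have hmeas := hFc.stronglyMeasurableAtFilter (μ := volume) isOpen_Ioo z hz
  have hca : ContinuousAt (fun t => F t * (-t) ^ r) z := by
    have : ContinuousAt F z := hF.continuousAt (Icc_mem_nhds hz.1 hz.2)
    exact this.mul ((continuous_neg.pow r).continuousAt)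
  exact intervalIntegral.integral_hasDerivAt_right
    (contOn_mul_pow hF hz' _ (continuous_neg.pow r)) hmeas hca

lemma Jf_eq_sum (hF : ContinuousOn F (Icc (-1) 0)) (m : ℕ) {w : ℝ} (hw : w ∈ Icc (-1:ℝ) 0) :
    Jf F m w = ∑ i ∈ Finset.range (m+1), (m.choose i : ℝ) * w ^ i * Mf F (m - i) w := by
  have expand : ∀ t : ℝ, F t * (w - t) ^ m
      = ∑ i ∈ Finset.range (m+1), (m.choose i : ℝ) * w ^ i * (F t * (-t) ^ (m - i)) := by
    intro t
    have : (w - t) ^ m = ∑ i ∈ Finset.range (m+1), w ^ i * (-t) ^ (m - i) * (m.choose i : ℝ) := by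
      rw [sub_eq_add_neg]; exact add_pow w (-t) m
    rw [this, Finset.mul_sum]
    apply Finset.sum_congr rfl
    intro i _; ring
  rw [Jf, intervalIntegral.integral_congr (fun t _ => expand t)]
  rw [intervalIntegral.integral_finset_sum]
  · apply Finset.sum_congr rfl
    intro i _
    have : (fun t => (m.choose i : ℝ) * w ^ i * (F t * (-t) ^ (m - i)))
        = fun t => ((m.choose i : ℝ) * w ^ i) * (F t * (-t) ^ (m - i)) := by funext t; ring
    rw [this, intervalIntegral.integral_const_mul]
    rfl
  · intro i _
    have := (contOn_mul_pow hF hw (fun t => (-t) ^ (m - i)) (continuous_neg.pow _)).const_mul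
      ((m.choose i : ℝ) * w ^ i)
    simpa [mul_assoc] using this

lemma hasDerivAt_Jf (hF : ContinuousOn F (Icc (-1) 0)) {m : ℕ} (hm : 1 ≤ m) {z : ℝ}
    (hz : z ∈ Ioo (-1:ℝ) 0) :
    HasDerivAt (Jf F m) ((m : ℝ) * Jf F (m-1) z) z := by
  have hz' : z ∈ Icc (-1:ℝ) 0 := Ioo_subset_Icc_self hz
  set S : ℝ → ℝ := fun w => ∑ i ∈ Finset.range (m+1), (m.choose i : ℝ) * w ^ i * Mf F (m - i) w
    with hS
  have key : HasDerivAt S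
      (∑ i ∈ Finset.range (m+1), (m.choose i : ℝ) *
        (((i:ℝ) * z ^ (i-1)) * Mf F (m-i) z + z ^ i * (F z * (-z) ^ (m-i)))) z := by
    apply HasDerivAt.fun_sum
    intro i _
    have h1 : HasDerivAt (fun w => w ^ i * Mf F (m - i) w)
        (((i:ℝ) * z ^ (i-1)) * Mf F (m-i) z + z ^ i * (F z * (-z) ^ (m-i))) z :=
      (hasDerivAt_pow i z).mul (hasDerivAt_Mf hF hz (m - i))
    have := h1.const_mul ((m.choose i : ℝ))
    simpa [mul_assoc, mul_comm, mul_left_comm] using this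
  have heq : S =ᶠ[nhds z] Jf F m := by
    filter_upwards [Ioo_mem_nhds hz.1 hz.2] with w hw
    exact (Jf_eq_sum hF m (Ioo_subset_Icc_self hw)).symm
  have hD : HasDerivAt (Jf F m)
      (∑ i ∈ Finset.range (m+1), (m.choose i : ℝ) *
        (((i:ℝ) * z ^ (i-1)) * Mf F (m-i) z + z ^ i * (F z * (-z) ^ (m-i)))) z :=
    key.congr_of_eventuallyEq heq.symm
  have hDval : (∑ i ∈ Finset.range (m+1), (m.choose i : ℝ) *
        (((i:ℝ) * z ^ (i-1)) * Mf F (m-i) z + z ^ i * (F z * (-z) ^ (m-i))))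
      = (m : ℝ) * Jf F (m-1) z := by
    simp only [mul_add]
    rw [Finset.sum_add_distrib]
    have h2 : (∑ i ∈ Finset.range (m+1), (m.choose i : ℝ) * (z ^ i * (F z * (-z) ^ (m-i)))) = 0 := by
      have e : (∑ i ∈ Finset.range (m+1), (m.choose i : ℝ) * (z ^ i * (F z * (-z) ^ (m-i))))
          = F z * ∑ i ∈ Finset.range (m+1), z ^ i * (-z) ^ (m-i) * (m.choose i : ℝ) := by
        rw [Finset.mul_sum]
        apply Finset.sum_congr rfl
        intro i _; ring
      rw [e, ← add_pow, add_neg_cancel, zero_pow (by omega : m ≠ 0), mul_zero]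
    have h1 : (∑ i ∈ Finset.range (m+1), (m.choose i : ℝ) * (((i:ℝ) * z ^ (i-1)) * Mf F (m-i) z))
        = (m : ℝ) * Jf F (m-1) z := by
      rw [Finset.sum_range_succ']
      simp only [Nat.cast_zero, zero_mul, mul_zero, add_zero, Nat.cast_add, Nat.cast_one,
        Nat.add_sub_cancel]
      rw [Jf_eq_sum hF (m-1) hz', Finset.mul_sum]
      rw [show m - 1 + 1 = m from Nat.succ_pred_eq_of_pos hm]
      apply Finset.sum_congr rfl
      intro i hi
      have hcast : (m.choose (i+1) : ℝ) * ((i:ℝ)+1) = (m:ℝ) * ((m-1).choose i : ℝ) := by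
        have hnat := Nat.add_one_mul_choose_eq (m-1) i
        have hm1 : m - 1 + 1 = m := by omega
        have hnat' : m * ((m-1).choose i) = m.choose (i+1) * (i+1) := by
          simpa [Nat.succ_eq_add_one, hm1] using hnat
        have := congrArg (Nat.cast (R := ℝ)) hnat'
        push_cast at this
        linarith
      have hidx : m - (i+1) = m - 1 - i := by omega
      rw [hidx]
      linear_combination (z ^ i * Mf F (m - 1 - i) z) * hcast
    rw [h1, h2, add_zero]
  rw [hDval] at hD
  exact hD

noncomputable def Gfun (F : ℝ → ℝ) (n : ℕ) : ℝ → ℝ :=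
  fun w => ((w + 1) ^ 2)⁻¹ * ∫ t in (-1 : ℝ)..w, F t * (w - t) ^ (n + 1)

lemma iteratedDeriv_Gfun (hF : ContinuousOn F (Icc (-1) 0)) (n : ℕ) :
    ∀ k, k ≤ n → ∃ a : ℕ → ℝ,
      (∀ j, |a j| ≤ (2*(n:ℝ)+4) ^ k) ∧
      ∀ z ∈ Ioo (-1:ℝ) 0, iteratedDeriv k (Gfun F n) z
        = ∑ j ∈ Finset.range (k+1), a j * ((z+1) ^ (2+j))⁻¹ * Jf F (n+1-k+j) z := by
  intro k
  induction k with
  | zero =>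
    intro _
    refine ⟨fun _ => 1, fun j => by norm_num, ?_⟩
    intro z hz
    simp [iteratedDeriv_zero, Gfun, Jf]
  | succ k ih =>
    intro hk1
    have hkn : k ≤ n := le_of_lt (Nat.lt_of_succ_le hk1)
    obtain ⟨a, ha, hform⟩ := ih hkn
    set a' : ℕ → ℝ := fun j =>
      (if j ≤ k then a j * ((n+1-k+j : ℕ) : ℝ) else 0)
      - (if 1 ≤ j ∧ j ≤ k+1 then a (j-1) * ((j+1 : ℕ) : ℝ) else 0) with ha'def
    have hb : (0:ℝ) ≤ (2*(n:ℝ)+4) ^ k := by positivity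
    refine ⟨a', ?_, ?_⟩
    · intro j
      have e1 : |(if j ≤ k then a j * ((n+1-k+j : ℕ) : ℝ) else 0)|
          ≤ (2*(n:ℝ)+4)^k * ((n:ℝ)+2) := by
        split
        · rw [abs_mul]
          have h1 : |((n+1-k+j : ℕ):ℝ)| ≤ (n:ℝ)+2 := by
            rw [abs_of_nonneg (Nat.cast_nonneg _)]
            have h2 : (n+1-k+j : ℕ) ≤ n+2 := by omega
            calc ((n+1-k+j : ℕ):ℝ) ≤ ((n+2 : ℕ):ℝ) := by exact_mod_cast h2
              _ = (n:ℝ)+2 := by push_cast; ring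
          exact mul_le_mul (ha j) h1 (abs_nonneg _) hb
        · simp only [abs_zero]; positivity
      have e2 : |(if 1 ≤ j ∧ j ≤ k+1 then a (j-1) * ((j+1 : ℕ) : ℝ) else 0)|
          ≤ (2*(n:ℝ)+4)^k * ((n:ℝ)+2) := by
        split
        · next hcond =>
          rw [abs_mul]
          have h1 : |((j+1 : ℕ):ℝ)| ≤ (n:ℝ)+2 := by
            rw [abs_of_nonneg (Nat.cast_nonneg _)]
            have h2 : (j+1 : ℕ) ≤ n+2 := by omega
            calc ((j+1 : ℕ):ℝ) ≤ ((n+2 : ℕ):ℝ) := by exact_mod_cast h2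
              _ = (n:ℝ)+2 := by push_cast; ring
          exact mul_le_mul (ha _) h1 (abs_nonneg _) hb
        · simp only [abs_zero]; positivity
      calc |a' j| ≤ |(if j ≤ k then a j * ((n+1-k+j : ℕ) : ℝ) else 0)|
            + |(if 1 ≤ j ∧ j ≤ k+1 then a (j-1) * ((j+1 : ℕ) : ℝ) else 0)| := abs_sub _ _
        _ ≤ (2*(n:ℝ)+4)^k * ((n:ℝ)+2) + (2*(n:ℝ)+4)^k * ((n:ℝ)+2) := add_le_add e1 e2
        _ ≤ (2*(n:ℝ)+4)^(k+1) := by rw [pow_succ]; nlinarith [hb]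
    · intro z hz
      have hz1 : (0:ℝ) < z + 1 := by linarith [hz.1]
      have hS : HasDerivAt
          (fun w => ∑ j ∈ Finset.range (k+1), a j * ((w+1) ^ (2+j))⁻¹ * Jf F (n+1-k+j) w)
          (∑ j ∈ Finset.range (k+1),
            (a j * ((n+1-k+j : ℕ):ℝ) * ((z+1)^(2+j))⁻¹ * Jf F (n-k+j) z
             - a j * (((j+1)+1 : ℕ):ℝ) * ((z+1)^(2+(j+1)))⁻¹ * Jf F (n-k+(j+1)) z)) z := by
        apply HasDerivAt.fun_sum
        intro j hj
        have h0 : HasDerivAt (fun w : ℝ => w + 1) 1 z := (hasDerivAt_id z).add_const 1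
        have hpow : HasDerivAt (fun w => (w+1)^(2+j)) ((((2+j):ℕ):ℝ) * (z+1)^(1+j)) z := by
          have h2 := h0.fun_pow (2+j)
          simpa [show 2+j-1 = 1+j from by omega] using h2
        have hinv : HasDerivAt (fun w => ((w+1)^(2+j))⁻¹)
            (-((((2+j):ℕ):ℝ) * (z+1)^(1+j)) / ((z+1)^(2+j))^2) z :=
          hpow.inv (by positivity)
        have hJ : HasDerivAt (Jf F (n+1-k+j)) (((n+1-k+j : ℕ):ℝ) * Jf F (n-k+j) z) z := by
          have h3 := hasDerivAt_Jf hF (show 1 ≤ n+1-k+j by omega) hz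
          simpa [show n+1-k+j-1 = n-k+j from by omega] using h3
        have hidx : n+1-k+j = n-k+(j+1) := by omega
        have h4' : HasDerivAt (fun w => a j * ((w+1)^(2+j))⁻¹ * Jf F (n+1-k+j) w)
            (a j * (-((((2+j):ℕ):ℝ) * (z+1)^(1+j)) / ((z+1)^(2+j))^2 * Jf F (n+1-k+j) z
              + ((z+1)^(2+j))⁻¹ * (((n+1-k+j : ℕ):ℝ) * Jf F (n-k+j) z))) z := by
          have h4 := (hinv.mul hJ).const_mul (a j)
          simpa [mul_assoc] using h4
        have hne : (z+1) ≠ 0 := ne_of_gt hz1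
        have hval : a j * ((n+1-k+j : ℕ):ℝ) * ((z+1)^(2+j))⁻¹ * Jf F (n-k+j) z
             - a j * (((j+1)+1 : ℕ):ℝ) * ((z+1)^(2+(j+1)))⁻¹ * Jf F (n-k+(j+1)) z
            = a j * (-((((2+j):ℕ):ℝ) * (z+1)^(1+j)) / ((z+1)^(2+j))^2 * Jf F (n+1-k+j) z
              + ((z+1)^(2+j))⁻¹ * (((n+1-k+j : ℕ):ℝ) * Jf F (n-k+j) z)) := by
          rw [hidx]
          push_cast
          field_simp
          ring
        rw [hval]
        exact h4'
      have heq : (fun w => ∑ j ∈ Finset.range (k+1), a j * ((w+1) ^ (2+j))⁻¹ * Jf F (n+1-k+j) w)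
          =ᶠ[nhds z] iteratedDeriv k (Gfun F n) := by
        filter_upwards [Ioo_mem_nhds hz.1 hz.2] with w hw
        exact (hform w hw).symm
      rw [iteratedDeriv_succ, Filter.EventuallyEq.deriv_eq heq.symm, hS.deriv]
      -- sum manipulation
      have hidx2 : ∀ j, n+1-(k+1)+j = n-k+j := by intro j; omega
      have RHS1 : ∑ j ∈ Finset.range (k+2),
            (if j ≤ k then a j * ((n+1-k+j : ℕ) : ℝ) else 0) * ((z+1) ^ (2+j))⁻¹
              * Jf F (n-k+j) z
          = ∑ j ∈ Finset.range (k+1),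
            a j * ((n+1-k+j : ℕ):ℝ) * ((z+1)^(2+j))⁻¹ * Jf F (n-k+j) z := by
        rw [Finset.sum_range_succ]
        rw [if_neg (by omega : ¬ (k+1 ≤ k))]
        simp only [zero_mul, add_zero]
        apply Finset.sum_congr rfl
        intro j hj
        rw [if_pos (by exact Nat.lt_succ_iff.mp (Finset.mem_range.mp hj))]
      have RHS2 : ∑ j ∈ Finset.range (k+2),
            (if 1 ≤ j ∧ j ≤ k+1 then a (j-1) * ((j+1 : ℕ) : ℝ) else 0) * ((z+1) ^ (2+j))⁻¹
              * Jf F (n-k+j) z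
          = ∑ j ∈ Finset.range (k+1),
            a j * (((j+1)+1 : ℕ):ℝ) * ((z+1)^(2+(j+1)))⁻¹ * Jf F (n-k+(j+1)) z := by
        rw [Finset.sum_range_succ']
        rw [if_neg (by omega : ¬ (1 ≤ 0 ∧ 0 ≤ k+1))]
        simp only [zero_mul, add_zero]
        apply Finset.sum_congr rfl
        intro j hj
        have hjk : j < k+1 := Finset.mem_range.mp hj
        rw [if_pos (show 1 ≤ j+1 ∧ j+1 ≤ k+1 by omega)]
        simp only [Nat.add_sub_cancel]
      calc ∑ j ∈ Finset.range (k+1),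
            (a j * ((n+1-k+j : ℕ):ℝ) * ((z+1)^(2+j))⁻¹ * Jf F (n-k+j) z
             - a j * (((j+1)+1 : ℕ):ℝ) * ((z+1)^(2+(j+1)))⁻¹ * Jf F (n-k+(j+1)) z)
          = (∑ j ∈ Finset.range (k+1),
              a j * ((n+1-k+j : ℕ):ℝ) * ((z+1)^(2+j))⁻¹ * Jf F (n-k+j) z)
            - ∑ j ∈ Finset.range (k+1),
              a j * (((j+1)+1 : ℕ):ℝ) * ((z+1)^(2+(j+1)))⁻¹ * Jf F (n-k+(j+1)) z :=
            Finset.sum_sub_distrib _ _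
        _ = ∑ j ∈ Finset.range (k+2), a' j * ((z+1) ^ (2+j))⁻¹ * Jf F (n+1-(k+1)+j) z := by
            rw [← RHS1, ← RHS2, ← Finset.sum_sub_distrib]
            apply Finset.sum_congr rfl
            intro j hj
            rw [hidx2 j, ha'def]
            ring

lemma abs_Jf_le (hF : ContinuousOn F (Icc (-1) 0)) {z : ℝ} (hz : z ∈ Ioo (-1:ℝ) 0) (j : ℕ) :
    |Jf F (1+j) z| ≤ (z+1)^j * ∫ t in (-1:ℝ)..z, |F t| * (z - t) := by
  have hz' : z ∈ Icc (-1:ℝ) 0 := Ioo_subset_Icc_self hz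
  have hle : (-1:ℝ) ≤ z := hz'.1
  have hint1 : IntervalIntegrable (fun t => F t * (z - t) ^ (1+j)) volume (-1) z :=
    contOn_mul_pow hF hz' _ ((continuous_const.sub continuous_id).pow _)
  have hint2 : IntervalIntegrable (fun t => |F t| * (z - t)) volume (-1) z := by
    have := contOn_mul_pow (F := fun t => |F t|) hF.abs hz' (fun t => (z - t) ^ 1)
      ((continuous_const.sub continuous_id).pow 1)
    simpa using this
  calc |Jf F (1+j) z| ≤ ∫ t in (-1:ℝ)..z, |F t * (z - t) ^ (1+j)| :=
      intervalIntegral.abs_integral_le_integral_abs hle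
    _ ≤ ∫ t in (-1:ℝ)..z, (z+1)^j * (|F t| * (z - t)) := by
      apply intervalIntegral.integral_mono_on hle hint1.abs (hint2.const_mul _)
      intro t ht
      rw [abs_mul, abs_of_nonneg (pow_nonneg (by linarith [ht.2] : (0:ℝ) ≤ z - t) _)]
      have h1 : (z - t)^(1+j) ≤ (z - t) * (z+1)^j := by
        rw [pow_add, pow_one]
        apply mul_le_mul_of_nonneg_left _ (by linarith [ht.2] : (0:ℝ) ≤ z - t)
        exact pow_le_pow_left₀ (by linarith [ht.2]) (by linarith [ht.1]) j
      calc |F t| * (z - t)^(1+j) ≤ |F t| * ((z - t) * (z+1)^j) :=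
          mul_le_mul_of_nonneg_left h1 (abs_nonneg _)
        _ = (z+1)^j * (|F t| * (z - t)) := by ring
    _ = (z+1)^j * ∫ t in (-1:ℝ)..z, |F t| * (z - t) := intervalIntegral.integral_const_mul _ _

lemma pointwise_bound (hF : ContinuousOn F (Icc (-1) 0)) (n : ℕ) {z : ℝ} (hz : z ∈ Ioo (-1:ℝ) 0) :
    |iteratedDeriv n (Gfun F n) z|
      ≤ ((n:ℝ)+1) * (2*(n:ℝ)+4)^n
        * (((z+1)^2)⁻¹ * ∫ t in (-1:ℝ)..z, |F t| * (z - t)) := by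
  obtain ⟨a, ha, hform⟩ := iteratedDeriv_Gfun hF n n le_rfl
  rw [hform z hz]
  have hz1 : (0:ℝ) < z + 1 := by linarith [hz.1]
  set L := ∫ t in (-1:ℝ)..z, |F t| * (z - t) with hL
  have hL0 : 0 ≤ L := by
    apply intervalIntegral.integral_nonneg hz.1.le
    intro t ht
    exact mul_nonneg (abs_nonneg _) (by linarith [ht.2])
  calc |∑ j ∈ Finset.range (n+1), a j * ((z+1) ^ (2+j))⁻¹ * Jf F (n+1-n+j) z|
      ≤ ∑ j ∈ Finset.range (n+1), |a j * ((z+1) ^ (2+j))⁻¹ * Jf F (n+1-n+j) z| :=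
        Finset.abs_sum_le_sum_abs _ _
    _ ≤ ∑ _j ∈ Finset.range (n+1), (2*(n:ℝ)+4)^n * (((z+1)^2)⁻¹ * L) := by
      apply Finset.sum_le_sum
      intro j _
      rw [show n+1-n+j = 1+j from by omega, abs_mul, abs_mul,
        abs_of_nonneg (by positivity : (0:ℝ) ≤ ((z+1)^(2+j))⁻¹)]
      calc |a j| * ((z+1)^(2+j))⁻¹ * |Jf F (1+j) z|
          ≤ (2*(n:ℝ)+4)^n * ((z+1)^(2+j))⁻¹ * ((z+1)^j * L) := by
            apply mul_le_mul (mul_le_mul_of_nonneg_right (ha j) (by positivity))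
              (abs_Jf_le hF hz j) (abs_nonneg _) (by positivity)
        _ = (2*(n:ℝ)+4)^n * (((z+1)^2)⁻¹ * L) := by
            rw [pow_add]
            field_simp
    _ = ((n:ℝ)+1) * (2*(n:ℝ)+4)^n * (((z+1)^2)⁻¹ * L) := by
      rw [Finset.sum_const, Finset.card_range, nsmul_eq_mul]
      push_cast
      ring

noncomputable def aexp (n : ℕ) : ℝ := 2*((n:ℝ)-1) - 1/2
noncomputable def bexp (n : ℕ) : ℝ := 2*((n:ℝ)+1) - 1/2

noncomputable def Wf (n : ℕ) (z : ℝ) : ℝ := (-z) ^ (aexp n/2) * ((z+1)^2)⁻¹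

noncomputable def ker (n : ℕ) (z t : ℝ) : ℝ≥0∞ :=
  if -1 < t ∧ t < z ∧ z < 0 then
    ENNReal.ofReal (Wf n z * ((z - t) * (-t) ^ (-(bexp n/2))))
  else 0

noncomputable def hfun : ℝ → ℝ≥0∞ := fun t =>
  if -1 < t ∧ t < 0 then ENNReal.ofReal ((1+t) ^ (-(1:ℝ)/2) * (-t) ^ (-(1:ℝ)/2)) else 1

lemma hfun_ne_zero (t : ℝ) : hfun t ≠ 0 := by
  unfold hfun
  split
  · next ht =>
    rw [Ne, ENNReal.ofReal_eq_zero, not_le]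
    exact mul_pos (Real.rpow_pos_of_pos (by linarith [ht.1]) _)
      (Real.rpow_pos_of_pos (by linarith [ht.2]) _)
  · exact one_ne_zero

lemma hfun_ne_top (t : ℝ) : hfun t ≠ ⊤ := by
  unfold hfun; split
  · exact ENNReal.ofReal_ne_top
  · exact ENNReal.one_ne_top

lemma hfun_measurable : Measurable hfun := by
  unfold hfun
  apply Measurable.ite
  · exact (measurableSet_lt measurable_const measurable_id).inter
      (measurableSet_lt measurable_id measurable_const)
  · apply ENNReal.measurable_ofReal.comp
    exact ((measurable_const.add measurable_id).pow_const _).mul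
      (measurable_id.neg.pow_const _)
  · exact measurable_const

lemma ker_measurable (n : ℕ) : Measurable (Function.uncurry (ker n)) := by
  have : Function.uncurry (ker n) = fun p : ℝ × ℝ =>
      if -1 < p.2 ∧ p.2 < p.1 ∧ p.1 < 0 then
        ENNReal.ofReal (Wf n p.1 * ((p.1 - p.2) * (-p.2) ^ (-(bexp n/2))))
      else 0 := by
    funext p; rfl
  rw [this]
  apply Measurable.ite
  · exact (measurableSet_lt measurable_const measurable_snd).inter
      ((measurableSet_lt measurable_snd measurable_fst).inter
        (measurableSet_lt measurable_fst measurable_const))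
  · apply ENNReal.measurable_ofReal.comp
    apply Measurable.mul
    · exact (measurable_fst.neg.pow_const _).mul
        (((measurable_fst.add_const 1).pow_const 2).inv)
    · exact (measurable_fst.sub measurable_snd).mul (measurable_snd.neg.pow_const _)
  · exact measurable_const

lemma ker_eq_zero_left {n : ℕ} {z : ℝ} (hz : ¬(-1 < z ∧ z < 0)) (t : ℝ) : ker n z t = 0 := by
  unfold ker
  rw [if_neg]
  rintro ⟨h1, h2, h3⟩
  exact hz ⟨lt_trans h1 h2, h3⟩

lemma ker_eq_zero_right {n : ℕ} {t : ℝ} (ht : ¬(-1 < t ∧ t < 0)) (z : ℝ) : ker n z t = 0 := by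
  unfold ker
  rw [if_neg]
  rintro ⟨h1, h2, h3⟩
  exact ht ⟨h1, lt_trans h2 h3⟩

lemma lint_mono_on {s : Set ℝ} (hs : MeasurableSet s) {g m : ℝ → ℝ} (h : ∀ x ∈ s, g x ≤ m x) :
    ∫⁻ x in s, ENNReal.ofReal (g x) ≤ ∫⁻ x in s, ENNReal.ofReal (m x) := by
  apply lintegral_mono_ae
  rw [ae_restrict_iff' hs]
  exact ae_of_all _ fun x hx => ENNReal.ofReal_le_ofReal (h x hx)

lemma lint_Ioo_eq {a b : ℝ} (hab : a ≤ b) {g : ℝ → ℝ} (hint : IntegrableOn g (Ioo a b))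
    (hpos : ∀ x ∈ Ioo a b, 0 ≤ g x) :
    ∫⁻ x in Ioo a b, ENNReal.ofReal (g x) = ENNReal.ofReal (∫ x in a..b, g x) := by
  rw [intervalIntegral.integral_of_le hab, integral_Ioc_eq_integral_Ioo,
    ofReal_integral_eq_lintegral_ofReal hint]
  filter_upwards [ae_restrict_mem measurableSet_Ioo] with x hx
  exact hpos x hx

lemma int_rpow_le {c d p : ℝ} (h0 : 0 < c) (hcd : c ≤ d) (hp : p < -1) :
    ∫ s in c..d, s ^ p ≤ c ^ (p+1) / (-(p+1)) := by
  rw [integral_rpow (Or.inr ⟨ne_of_lt hp, by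
    rw [uIcc_of_le hcd]; exact fun hmem => absurd hmem.1 (not_le.mpr h0)⟩)]
  have h1 : (0:ℝ) ≤ d ^ (p+1) := Real.rpow_nonneg (le_trans h0.le hcd) _
  have h2 : (d ^ (p+1) - c ^ (p+1)) / (p+1) = (c ^ (p+1) - d ^ (p+1)) / (-(p+1)) := by
    rw [div_eq_div_iff (by linarith) (by linarith)]; ring
  rw [h2]
  gcongr
  · linarith
  · linarith

lemma int_rpow_le' {c d p : ℝ} (h0 : 0 ≤ c) (hcd : c ≤ d) (hp : -1 < p) :
    ∫ s in c..d, s ^ p ≤ d ^ (p+1) / (p+1) := by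
  rw [integral_rpow (Or.inl hp)]
  have h1 : (0:ℝ) ≤ c ^ (p+1) := Real.rpow_nonneg h0 _
  gcongr
  · linarith
  · linarith

lemma intInt_one_add_rpow {p : ℝ} (hp : -1 < p) (a b : ℝ) :
    IntervalIntegrable (fun t => (1+t) ^ p) volume a b := by
  have h := (intervalIntegral.intervalIntegrable_rpow' (a := a+1) (b := b+1) hp).comp_add_right 1
  simpa [add_comm] using h

lemma int_one_add_rpow {p : ℝ} (hp : -1 < p) {z : ℝ} (hz : -1 ≤ z) :
    ∫ t in (-1:ℝ)..z, (1+t) ^ p = (1+z) ^ (p+1) / (p+1) := by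
  have e : (fun t : ℝ => (1+t) ^ p) = fun t => ((fun s : ℝ => s ^ p) (t + 1)) := by
    funext t; rw [add_comm]
  rw [e, intervalIntegral.integral_comp_add_right (fun s : ℝ => s ^ p) 1]
  rw [integral_rpow (Or.inl hp)]
  rw [show (-1:ℝ)+1 = 0 by norm_num, Real.zero_rpow (by linarith : p+1 ≠ 0), add_comm z 1]
  ring

lemma I1_eval {z : ℝ} (hz1 : -1 < z) (hz2 : z < 0) :
    ∫ t in (-1:ℝ)..z, (z - t) * (1+t) ^ (-(1:ℝ)/2) = (4/3) * (1+z) ^ ((3:ℝ)/2) := by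
  have hint : IntervalIntegrable (fun t => (1+t) ^ (-(1:ℝ)/2)) volume (-1) z :=
    intInt_one_add_rpow (by norm_num) _ _
  have hint2 : IntervalIntegrable (fun t => (1+t) ^ ((1:ℝ)/2)) volume (-1) z :=
    intInt_one_add_rpow (by norm_num) _ _
  have congr1 : ∀ t ∈ uIcc (-1:ℝ) z,
      (z - t) * (1+t) ^ (-(1:ℝ)/2) = (1+z) * (1+t) ^ (-(1:ℝ)/2) - (1+t) ^ ((1:ℝ)/2) := by
    intro t ht
    rw [uIcc_of_le (by linarith)] at ht
    have h1t : 0 ≤ 1 + t := by linarith [ht.1]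
    rcases eq_or_lt_of_le h1t with h | h
    · rw [← h, Real.zero_rpow (by norm_num : -(1:ℝ)/2 ≠ 0),
        Real.zero_rpow (by norm_num : (1:ℝ)/2 ≠ 0)]
      ring
    · have e1 : (1+t) ^ ((1:ℝ)/2) = (1+t) * (1+t) ^ (-(1:ℝ)/2) := by
        nth_rewrite 2 [← Real.rpow_one (1+t)]
        rw [← Real.rpow_add h]
        norm_num
      rw [e1]
      ring
  rw [intervalIntegral.integral_congr congr1,
    intervalIntegral.integral_sub (hint.const_mul _) hint2,
    intervalIntegral.integral_const_mul,
    int_one_add_rpow (by norm_num) hz1.le, int_one_add_rpow (by norm_num) hz1.le]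
  have h1z : (0:ℝ) < 1 + z := by linarith
  have e2 : (1+z) * ((1+z) ^ ((1:ℝ)/2)) = (1+z) ^ ((3:ℝ)/2) := by
    nth_rewrite 1 [← Real.rpow_one (1+z)]
    rw [← Real.rpow_add h1z]
    norm_num
  norm_num
  nlinarith [e2]

lemma rpow_neg_le_pow2 {x p : ℝ} {K : ℕ} (hx : 1/2 ≤ x) (hp : 0 ≤ p) (hpK : p ≤ (K:ℝ)) :
    x ^ (-p) ≤ (2:ℝ) ^ K := by
  calc x ^ (-p) ≤ ((1:ℝ)/2) ^ (-p) :=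
      Real.rpow_le_rpow_of_nonpos (by norm_num) hx (neg_nonpos.mpr hp)
    _ = (2:ℝ) ^ p := by
      rw [show (1:ℝ)/2 = 2⁻¹ by norm_num, Real.inv_rpow (by norm_num),
        ← Real.rpow_neg (by norm_num), neg_neg]
    _ ≤ (2:ℝ) ^ (K:ℝ) := Real.rpow_le_rpow_of_exponent_le one_le_two hpK
    _ = (2:ℝ) ^ K := Real.rpow_natCast 2 K

lemma one_le_rpow_negexp {x p : ℝ} (hx : 0 < x) (hx1 : x ≤ 1) (hp : 0 ≤ p) : 1 ≤ x ^ (-p) :=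
  Real.one_le_rpow_of_pos_of_le_one_of_nonpos hx hx1 (neg_nonpos.mpr hp)

lemma cond_i_T (n : ℕ) (hn : 2 ≤ n) {z : ℝ} (hz1 : -1 < z) (hz2 : z < 0) :
    ∫⁻ t in Ioo (-1:ℝ) z,
        ENNReal.ofReal ((z - t) * ((1+t) ^ (-(1:ℝ)/2) * (-t) ^ (-((bexp n + 1)/2))))
      ≤ ENNReal.ofReal ((2:ℝ)^(n+6) *
          ((-z) ^ (-((aexp n + 1)/2)) * (1+z) ^ ((3:ℝ)/2))) := by
  have hn' : (2:ℝ) ≤ (n:ℝ) := by exact_mod_cast hn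
  have hB1 : (bexp n + 1)/2 = (n:ℝ) + 5/4 := by unfold bexp; ring
  have hA1 : (aexp n + 1)/2 = (n:ℝ) - 3/4 := by unfold aexp; ring
  have hXone : 1 ≤ (-z) ^ (-((aexp n + 1)/2)) :=
    one_le_rpow_negexp (by linarith) (by linarith) (by rw [hA1]; linarith)
  have hYnn : (0:ℝ) ≤ (1+z) ^ ((3:ℝ)/2) := Real.rpow_nonneg (by linarith) _
  have hpow_pos : (0:ℝ) < (2:ℝ)^(n+2) := by positivity
  by_cases hzc : z ≤ -(1/2)
  · -- Case z ≤ -1/2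
    have step1 : ∫⁻ t in Ioo (-1:ℝ) z,
          ENNReal.ofReal ((z - t) * ((1+t) ^ (-(1:ℝ)/2) * (-t) ^ (-((bexp n + 1)/2))))
        ≤ ∫⁻ t in Ioo (-1:ℝ) z,
          ENNReal.ofReal ((2:ℝ)^(n+2) * ((z - t) * (1+t) ^ (-(1:ℝ)/2))) := by
      apply lint_mono_on measurableSet_Ioo
      intro t ht
      have hc : (-t) ^ (-((bexp n + 1)/2)) ≤ (2:ℝ)^(n+2) :=
        rpow_neg_le_pow2 (by linarith [ht.2]) (by rw [hB1]; linarith)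
          (by rw [hB1]; push_cast; linarith)
      have h1 : (0:ℝ) ≤ (z - t) * (1+t) ^ (-(1:ℝ)/2) :=
        mul_nonneg (by linarith [ht.2]) (Real.rpow_nonneg (by linarith [ht.1]) _)
      calc (z - t) * ((1+t) ^ (-(1:ℝ)/2) * (-t) ^ (-((bexp n + 1)/2)))
          = ((z - t) * (1+t) ^ (-(1:ℝ)/2)) * (-t) ^ (-((bexp n + 1)/2)) := by ring
        _ ≤ ((z - t) * (1+t) ^ (-(1:ℝ)/2)) * (2:ℝ)^(n+2) :=
            mul_le_mul_of_nonneg_left hc h1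
        _ = (2:ℝ)^(n+2) * ((z - t) * (1+t) ^ (-(1:ℝ)/2)) := by ring
    have hg : ContinuousOn (fun t : ℝ => z - t) (uIcc (-1) z) :=
      (continuous_const.sub continuous_id).continuousOn
    have hint : IntervalIntegrable (fun t => (z - t) * (1+t) ^ (-(1:ℝ)/2)) volume (-1) z :=
      (intInt_one_add_rpow (by norm_num : (-1:ℝ) < -(1:ℝ)/2) (-1) z).continuousOn_mul hg
    have step2 : ∫⁻ t in Ioo (-1:ℝ) z,
          ENNReal.ofReal ((2:ℝ)^(n+2) * ((z - t) * (1+t) ^ (-(1:ℝ)/2)))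
        = ENNReal.ofReal ((2:ℝ)^(n+2) * ((4/3) * (1+z) ^ ((3:ℝ)/2))) := by
      rw [lint_Ioo_eq hz1.le ((hint.const_mul _).1.mono_set Ioo_subset_Ioc_self)
        (fun x hx => mul_nonneg hpow_pos.le (mul_nonneg (by linarith [hx.2])
          (Real.rpow_nonneg (by linarith [hx.1]) _)))]
      rw [intervalIntegral.integral_const_mul, I1_eval hz1 hz2]
    refine le_trans step1 (le_trans (le_of_eq step2) (ENNReal.ofReal_le_ofReal ?_))
    have h26 : (2:ℝ)^(n+6) = (2:ℝ)^(n+2) * 16 := by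
      rw [show (16:ℝ) = 2^4 by norm_num, ← pow_add]
    nlinarith [mul_le_mul_of_nonneg_left hXone hpow_pos.le,
      mul_nonneg hpow_pos.le hYnn, mul_le_mul_of_nonneg_right hXone hYnn]
  · -- Case -1/2 < z
    push_neg at hzc
    have hsplit : Ioo (-1:ℝ) z = Ioo (-1) (-(1/2)) ∪ Ico (-(1/2)) z := by
      rw [Ioo_union_Ico_eq_Ioo (by norm_num) hzc.le]
    have hT : ∫⁻ t in Ioo (-1:ℝ) z,
          ENNReal.ofReal ((z - t) * ((1+t) ^ (-(1:ℝ)/2) * (-t) ^ (-((bexp n + 1)/2))))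
        ≤ (∫⁻ t in Ioo (-1:ℝ) (-(1/2)),
            ENNReal.ofReal ((z - t) * ((1+t) ^ (-(1:ℝ)/2) * (-t) ^ (-((bexp n + 1)/2)))))
          + ∫⁻ t in Ico (-(1/2):ℝ) z,
            ENNReal.ofReal ((z - t) * ((1+t) ^ (-(1:ℝ)/2) * (-t) ^ (-((bexp n + 1)/2)))) := by
      rw [hsplit]
      exact lintegral_union_le _ _ _
    -- piece 1
    have hp1 : ∫⁻ t in Ioo (-1:ℝ) (-(1/2)),
          ENNReal.ofReal ((z - t) * ((1+t) ^ (-(1:ℝ)/2) * (-t) ^ (-((bexp n + 1)/2))))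
        ≤ ENNReal.ofReal ((2:ℝ)^(n+3)) := by
      have hm : ∫⁻ t in Ioo (-1:ℝ) (-(1/2)),
            ENNReal.ofReal ((z - t) * ((1+t) ^ (-(1:ℝ)/2) * (-t) ^ (-((bexp n + 1)/2))))
          ≤ ∫⁻ t in Ioo (-1:ℝ) (-(1/2)),
            ENNReal.ofReal ((2:ℝ)^(n+2) * (1+t) ^ (-(1:ℝ)/2)) := by
        apply lint_mono_on measurableSet_Ioo
        intro t ht
        have hc : (-t) ^ (-((bexp n + 1)/2)) ≤ (2:ℝ)^(n+2) :=
          rpow_neg_le_pow2 (by linarith [ht.2]) (by rw [hB1]; linarith)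
            (by rw [hB1]; push_cast; linarith)
        have hzt : z - t ≤ 1 := by linarith [ht.1]
        have hrnn : (0:ℝ) ≤ (1+t) ^ (-(1:ℝ)/2) := Real.rpow_nonneg (by linarith [ht.1]) _
        calc (z - t) * ((1+t) ^ (-(1:ℝ)/2) * (-t) ^ (-((bexp n + 1)/2)))
            ≤ 1 * ((1+t) ^ (-(1:ℝ)/2) * (2:ℝ)^(n+2)) := by
              apply mul_le_mul hzt (mul_le_mul_of_nonneg_left hc hrnn)
                (mul_nonneg hrnn (Real.rpow_nonneg (by linarith [ht.2]) _)) zero_le_one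
          _ = (2:ℝ)^(n+2) * (1+t) ^ (-(1:ℝ)/2) := by ring
      have heval : ∫⁻ t in Ioo (-1:ℝ) (-(1/2)),
            ENNReal.ofReal ((2:ℝ)^(n+2) * (1+t) ^ (-(1:ℝ)/2))
          = ENNReal.ofReal ((2:ℝ)^(n+2) *
              ((1+(-(1/2):ℝ)) ^ (-(1:ℝ)/2 + 1) / (-(1:ℝ)/2 + 1))) := by
        rw [lint_Ioo_eq (by norm_num)
          (((intInt_one_add_rpow (by norm_num : (-1:ℝ) < -(1:ℝ)/2) (-1)
            (-(1/2))).const_mul _).1.mono_set Ioo_subset_Ioc_self)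
          (fun x hx => mul_nonneg hpow_pos.le (Real.rpow_nonneg (by linarith [hx.1]) _))]
        rw [intervalIntegral.integral_const_mul, int_one_add_rpow (by norm_num) (by norm_num)]
      refine le_trans hm (le_trans (le_of_eq heval) (ENNReal.ofReal_le_ofReal ?_))
      have : ((1:ℝ)+(-(1/2))) ^ (-(1:ℝ)/2 + 1) ≤ 1 :=
        Real.rpow_le_one (by norm_num) (by norm_num) (by norm_num)
      have hd : ((1:ℝ)+(-(1/2))) ^ (-(1:ℝ)/2 + 1) / (-(1:ℝ)/2 + 1) ≤ 2 := by
        rw [div_le_iff₀ (by norm_num : (0:ℝ) < -(1:ℝ)/2 + 1)]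
        linarith
      calc (2:ℝ)^(n+2) * (((1:ℝ)+(-(1/2))) ^ (-(1:ℝ)/2 + 1) / (-(1:ℝ)/2 + 1))
          ≤ (2:ℝ)^(n+2) * 2 := mul_le_mul_of_nonneg_left hd hpow_pos.le
        _ = (2:ℝ)^(n+3) := by rw [← pow_succ]
    -- piece 2
    have hp2 : ∫⁻ t in Ico (-(1/2):ℝ) z,
          ENNReal.ofReal ((z - t) * ((1+t) ^ (-(1:ℝ)/2) * (-t) ^ (-((bexp n + 1)/2))))
        ≤ ENNReal.ofReal (2 * (-z) ^ (-((aexp n + 1)/2))) := by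
      rw [Measure.restrict_congr_set Ioo_ae_eq_Ico.symm]
      have hm : ∫⁻ t in Ioo (-(1/2):ℝ) z,
            ENNReal.ofReal ((z - t) * ((1+t) ^ (-(1:ℝ)/2) * (-t) ^ (-((bexp n + 1)/2))))
          ≤ ∫⁻ t in Ioo (-(1/2):ℝ) z,
            ENNReal.ofReal (2 * (-t) ^ (1 - (bexp n + 1)/2)) := by
        apply lint_mono_on measurableSet_Ioo
        intro t ht
        have htz : t < 0 := lt_trans ht.2 hz2
        have h1t : 1/2 ≤ 1 + t := by linarith [ht.1]
        have hc : (1+t) ^ (-(1:ℝ)/2) ≤ 2 := by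
          have := rpow_neg_le_pow2 (K := 1) h1t (by norm_num : (0:ℝ) ≤ 1/2) (by norm_num)
          simpa [show -(1:ℝ)/2 = -(1/2 : ℝ) by norm_num] using this
        have hzt : z - t ≤ -t := by linarith
        have hcnn : (0:ℝ) ≤ (-t) ^ (-((bexp n + 1)/2)) := Real.rpow_nonneg (by linarith) _
        calc (z - t) * ((1+t) ^ (-(1:ℝ)/2) * (-t) ^ (-((bexp n + 1)/2)))
            ≤ (-t) * (2 * (-t) ^ (-((bexp n + 1)/2))) := by
              apply mul_le_mul hzt (mul_le_mul_of_nonneg_right hc hcnn)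
                (mul_nonneg (Real.rpow_nonneg (by linarith [ht.1]) _) hcnn) (by linarith)
          _ = 2 * ((-t) ^ (1:ℝ) * (-t) ^ (-((bexp n + 1)/2))) := by
              rw [Real.rpow_one]; ring
          _ = 2 * (-t) ^ (1 - (bexp n + 1)/2) := by
              rw [← Real.rpow_add (by linarith : (0:ℝ) < -t)]
              ring_nf
      have hcont : ContinuousOn (fun t : ℝ => 2 * (-t) ^ (1 - (bexp n + 1)/2)) (Icc (-(1/2)) z) := by
        apply ContinuousOn.mul continuousOn_const
        apply ContinuousOn.rpow_const (continuous_neg.continuousOn)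
        intro x hx
        exact Or.inl (ne_of_gt (by linarith [hx.2] : (0:ℝ) < -x))
      have heval : ∫⁻ t in Ioo (-(1/2):ℝ) z,
            ENNReal.ofReal (2 * (-t) ^ (1 - (bexp n + 1)/2))
          = ENNReal.ofReal (2 * ∫ t in (-(1/2):ℝ)..z, (-t) ^ (1 - (bexp n + 1)/2)) := by
        rw [lint_Ioo_eq hzc.le ((hcont.integrableOn_Icc).mono_set Ioo_subset_Icc_self)
          (fun x hx => mul_nonneg (by norm_num) (Real.rpow_nonneg (by linarith [hx.2, hz2]) _))]
        rw [intervalIntegral.integral_const_mul]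
      refine le_trans hm (le_trans (le_of_eq heval) ?_)
      apply ENNReal.ofReal_le_ofReal
      have hcomp : ∫ t in (-(1/2):ℝ)..z, (-t) ^ (1 - (bexp n + 1)/2)
          = ∫ s in (-z)..(1/2:ℝ), s ^ (1 - (bexp n + 1)/2) := by
        rw [intervalIntegral.integral_comp_neg (fun s => s ^ (1 - (bexp n + 1)/2))]
        norm_num
      rw [hcomp]
      have hle := int_rpow_le (c := -z) (d := 1/2) (p := 1 - (bexp n + 1)/2)
        (by linarith) (by linarith) (by rw [hB1]; linarith)
      have hexp : 1 - (bexp n + 1)/2 + 1 = -((aexp n + 1)/2) := by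
        rw [hB1, hA1]; ring
      have hden : (1:ℝ) ≤ -(1 - (bexp n + 1)/2 + 1) := by rw [hB1]; linarith
      have hnum : (0:ℝ) ≤ (-z) ^ (1 - (bexp n + 1)/2 + 1) := Real.rpow_nonneg (by linarith) _
      have hfin : (-z) ^ (1 - (bexp n + 1)/2 + 1) / (-(1 - (bexp n + 1)/2 + 1))
          ≤ (-z) ^ (-((aexp n + 1)/2)) := by
        rw [hexp]
        exact div_le_self (Real.rpow_nonneg (by linarith) _) (by rw [← hexp]; exact hden)
      linarith [le_trans hle hfin]
    -- combine
    have hY : (1/4:ℝ) ≤ (1+z) ^ ((3:ℝ)/2) := by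
      have h1 : ((1:ℝ)/2) ^ ((3:ℝ)/2) ≤ (1+z) ^ ((3:ℝ)/2) :=
        Real.rpow_le_rpow (by norm_num) (by linarith) (by norm_num)
      have h2 : ((1:ℝ)/2) ^ ((2:ℝ)) ≤ ((1:ℝ)/2) ^ ((3:ℝ)/2) :=
        Real.rpow_le_rpow_of_exponent_ge (by norm_num) (by norm_num) (by norm_num)
      have h3 : ((1:ℝ)/2) ^ ((2:ℝ)) = 1/4 := by
        rw [show (2:ℝ) = ((2:ℕ):ℝ) by norm_num, Real.rpow_natCast]; norm_num
      linarith
    calc ∫⁻ t in Ioo (-1:ℝ) z,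
          ENNReal.ofReal ((z - t) * ((1+t) ^ (-(1:ℝ)/2) * (-t) ^ (-((bexp n + 1)/2))))
        ≤ ENNReal.ofReal ((2:ℝ)^(n+3)) + ENNReal.ofReal (2 * (-z) ^ (-((aexp n + 1)/2))) :=
          le_trans hT (add_le_add hp1 hp2)
      _ = ENNReal.ofReal ((2:ℝ)^(n+3) + 2 * (-z) ^ (-((aexp n + 1)/2))) := by
          rw [← ENNReal.ofReal_add (by positivity)
            (mul_nonneg (by norm_num) (Real.rpow_nonneg (by linarith) _))]
      _ ≤ ENNReal.ofReal ((2:ℝ)^(n+6) *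
            ((-z) ^ (-((aexp n + 1)/2)) * (1+z) ^ ((3:ℝ)/2))) := by
          apply ENNReal.ofReal_le_ofReal
          set X := (-z) ^ (-((aexp n + 1)/2))
          set Y := (1+z) ^ ((3:ℝ)/2)
          have hc3 : (0:ℝ) < (2:ℝ)^(n+3) := by positivity
          have hc2 : (2:ℝ) ≤ (2:ℝ)^(n+3) := by
            calc (2:ℝ) = 2^1 := (pow_one 2).symm
              _ ≤ 2^(n+3) := pow_le_pow_right₀ one_le_two (by omega)
          have h68 : (2:ℝ)^(n+6) = 8 * (2:ℝ)^(n+3) := by rw [pow_add, pow_add]; ring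
          rw [h68]
          have hXnn : (0:ℝ) ≤ X := le_trans zero_le_one hXone
          have t1 : 2 * (2:ℝ)^(n+3) * X ≤ 8 * (2:ℝ)^(n+3) * (X * Y) := by
            have h' : X * (1/4) ≤ X * Y := mul_le_mul_of_nonneg_left hY hXnn
            calc 2 * (2:ℝ)^(n+3) * X = 8 * (2:ℝ)^(n+3) * (X * (1/4)) := by ring
              _ ≤ 8 * (2:ℝ)^(n+3) * (X * Y) :=
                  mul_le_mul_of_nonneg_left h' (by positivity)
          have t2 : (2:ℝ)^(n+3) * 1 ≤ (2:ℝ)^(n+3) * X := mul_le_mul_of_nonneg_left hXone hc3.le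
          have t3 : 2 * X ≤ (2:ℝ)^(n+3) * X := mul_le_mul_of_nonneg_right hc2 hXnn
          linarith

lemma Wf_nonneg (n : ℕ) {z : ℝ} (hz2 : z < 0) : 0 ≤ Wf n z :=
  mul_nonneg (Real.rpow_nonneg (by linarith) _) (inv_nonneg.mpr (by positivity))

lemma cond_i (n : ℕ) (hn : 2 ≤ n) (z : ℝ) :
    ∫⁻ t, ker n z t * hfun t ≤ ENNReal.ofReal ((2:ℝ)^(n+6)) * hfun z := by
  by_cases hz : -1 < z ∧ z < 0
  · obtain ⟨hz1, hz2⟩ := hz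
    have h1z : (0:ℝ) < 1 + z := by linarith
    have hW : 0 ≤ Wf n z := Wf_nonneg n hz2
    have hindicator : ∀ t, ker n z t * hfun t
        = (Ioo (-1:ℝ) z).indicator (fun t => ENNReal.ofReal (Wf n z) *
            ENNReal.ofReal ((z - t) * ((1+t) ^ (-(1:ℝ)/2) * (-t) ^ (-((bexp n + 1)/2))))) t := by
      intro t
      by_cases ht : t ∈ Ioo (-1:ℝ) z
      · rw [indicator_of_mem ht]
        obtain ⟨ht1, ht2⟩ := ht
        have htz : t < 0 := lt_trans ht2 hz2
        unfold ker hfun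
        rw [if_pos ⟨ht1, ht2, hz2⟩, if_pos ⟨ht1, htz⟩]
        rw [← ENNReal.ofReal_mul (mul_nonneg hW (mul_nonneg (by linarith : (0:ℝ) ≤ z - t)
          (Real.rpow_nonneg (by linarith : (0:ℝ) ≤ -t) _))), ← ENNReal.ofReal_mul hW]
        congr 1
        have hmerge : (-t) ^ (-(bexp n/2)) * (-t) ^ (-(1:ℝ)/2)
            = (-t) ^ (-((bexp n + 1)/2)) := by
          rw [← Real.rpow_add (by linarith : (0:ℝ) < -t)]
          ring_nf
        calc Wf n z * ((z - t) * (-t) ^ (-(bexp n/2)))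
              * ((1+t) ^ (-(1:ℝ)/2) * (-t) ^ (-(1:ℝ)/2))
            = Wf n z * ((z - t) * ((1+t) ^ (-(1:ℝ)/2)
                * ((-t) ^ (-(bexp n/2)) * (-t) ^ (-(1:ℝ)/2)))) := by ring
          _ = Wf n z * ((z - t) * ((1+t) ^ (-(1:ℝ)/2) * (-t) ^ (-((bexp n + 1)/2)))) := by
              rw [hmerge]
      · rw [indicator_of_notMem ht]
        have hk : ker n z t = 0 := by
          unfold ker
          rw [if_neg]
          rintro ⟨h1, h2, _⟩
          exact ht ⟨h1, h2⟩
        rw [hk, zero_mul]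
    rw [lintegral_congr hindicator, lintegral_indicator measurableSet_Ioo _,
      lintegral_const_mul' _ _ ENNReal.ofReal_ne_top]
    have hT := cond_i_T n hn hz1 hz2
    calc ENNReal.ofReal (Wf n z) * ∫⁻ t in Ioo (-1:ℝ) z,
          ENNReal.ofReal ((z - t) * ((1+t) ^ (-(1:ℝ)/2) * (-t) ^ (-((bexp n + 1)/2))))
        ≤ ENNReal.ofReal (Wf n z) * ENNReal.ofReal ((2:ℝ)^(n+6) *
            ((-z) ^ (-((aexp n + 1)/2)) * (1+z) ^ ((3:ℝ)/2))) := mul_le_mul' le_rfl hT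
      _ = ENNReal.ofReal ((2:ℝ)^(n+6) * ((1+z) ^ (-(1:ℝ)/2) * (-z) ^ (-(1:ℝ)/2))) := by
          rw [← ENNReal.ofReal_mul hW]
          congr 1
          have hmz : (-z) ^ (aexp n/2) * (-z) ^ (-((aexp n + 1)/2)) = (-z) ^ (-(1:ℝ)/2) := by
            rw [← Real.rpow_add (by linarith : (0:ℝ) < -z)]
            congr 1
            ring
          have hu : ((z+1)^2)⁻¹ * (1+z) ^ ((3:ℝ)/2) = (1+z) ^ (-(1:ℝ)/2) := by
            rw [show z+1 = 1+z from by ring, ← Real.rpow_natCast (1+z) 2,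
              ← Real.rpow_neg h1z.le, ← Real.rpow_add h1z]
            norm_num
          calc Wf n z * ((2:ℝ)^(n+6) * ((-z) ^ (-((aexp n + 1)/2)) * (1+z) ^ ((3:ℝ)/2)))
              = (2:ℝ)^(n+6) * (((-z) ^ (aexp n/2) * (-z) ^ (-((aexp n + 1)/2)))
                  * (((z+1)^2)⁻¹ * (1+z) ^ ((3:ℝ)/2))) := by unfold Wf; ring
            _ = (2:ℝ)^(n+6) * ((1+z) ^ (-(1:ℝ)/2) * (-z) ^ (-(1:ℝ)/2)) := by
                rw [hmz, hu]; ring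
      _ = ENNReal.ofReal ((2:ℝ)^(n+6)) * hfun z := by
          unfold hfun
          rw [if_pos ⟨hz1, hz2⟩, ← ENNReal.ofReal_mul (by positivity)]
  · have h0 : ∫⁻ t, ker n z t * hfun t = 0 := by
      simp only [ker_eq_zero_left hz, zero_mul, lintegral_zero]
    rw [h0]
    exact zero_le

lemma cond_ii_S (n : ℕ) (hn : 2 ≤ n) {t : ℝ} (ht1 : -1 < t) (ht2 : t < 0) :
    ∫⁻ z in Ioo t (0:ℝ),
        ENNReal.ofReal ((z - t) * ((-z) ^ ((aexp n - 1)/2) * (1+z) ^ (-(5:ℝ)/2)))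
      ≤ ENNReal.ofReal ((2:ℝ)^(n+5) * ((-t) ^ ((aexp n + 3)/2) * (1+t) ^ (-(1:ℝ)/2))) := by
  have hn' : (2:ℝ) ≤ (n:ℝ) := by exact_mod_cast hn
  have hA1 : (aexp n - 1)/2 = (n:ℝ) - 7/4 := by unfold aexp; ring
  have hA3 : (aexp n + 3)/2 = (n:ℝ) + 1/4 := by unfold aexp; ring
  have hYone : 1 ≤ (1+t) ^ (-(1:ℝ)/2) := by
    rw [show -(1:ℝ)/2 = -((1:ℝ)/2) by norm_num]
    exact one_le_rpow_negexp (by linarith) (by linarith) (by norm_num)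
  have hYnn : (0:ℝ) ≤ (1+t) ^ (-(1:ℝ)/2) := by linarith
  by_cases htc : -(1/2) ≤ t
  · -- t close to 0
    have hm : ∫⁻ z in Ioo t (0:ℝ),
          ENNReal.ofReal ((z - t) * ((-z) ^ ((aexp n - 1)/2) * (1+z) ^ (-(5:ℝ)/2)))
        ≤ ∫⁻ z in Ioo t (0:ℝ),
          ENNReal.ofReal ((8 * (-t)) * (-z) ^ ((aexp n - 1)/2)) := by
      apply lint_mono_on measurableSet_Ioo
      intro z hz
      have h5 : (1+z) ^ (-(5:ℝ)/2) ≤ 8 := by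
        have := rpow_neg_le_pow2 (x := 1+z) (p := 5/2) (K := 3)
          (by linarith [hz.1]) (by norm_num) (by norm_num)
        have h8 : ((2:ℝ)^(3:ℕ)) = 8 := by norm_num
        rw [h8] at this
        simpa [show -((5:ℝ)/2) = -(5:ℝ)/2 by norm_num] using this
      have hzn : (0:ℝ) ≤ (-z) ^ ((aexp n - 1)/2) := Real.rpow_nonneg (by linarith [hz.2]) _
      calc (z - t) * ((-z) ^ ((aexp n - 1)/2) * (1+z) ^ (-(5:ℝ)/2))
          ≤ (-t) * ((-z) ^ ((aexp n - 1)/2) * 8) := by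
            apply mul_le_mul (by linarith [hz.2])
              (mul_le_mul_of_nonneg_left h5 hzn)
              (mul_nonneg hzn (Real.rpow_nonneg (by linarith [hz.1, ht1]) _)) (by linarith)
        _ = (8 * (-t)) * (-z) ^ ((aexp n - 1)/2) := by ring
    have hcont : ContinuousOn (fun z : ℝ => (8 * (-t)) * (-z) ^ ((aexp n - 1)/2)) (Icc t 0) := by
      apply ContinuousOn.mul continuousOn_const
      apply ContinuousOn.rpow_const (continuous_neg.continuousOn)
      intro x _
      exact Or.inr (by rw [hA1]; linarith)
    have heval : ∫⁻ z in Ioo t (0:ℝ),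
          ENNReal.ofReal ((8 * (-t)) * (-z) ^ ((aexp n - 1)/2))
        = ENNReal.ofReal ((8 * (-t)) * ∫ z in t..(0:ℝ), (-z) ^ ((aexp n - 1)/2)) := by
      rw [lint_Ioo_eq ht2.le ((hcont.integrableOn_Icc).mono_set Ioo_subset_Icc_self)
        (fun x hx => mul_nonneg (by linarith) (Real.rpow_nonneg (by linarith [hx.2]) _))]
      rw [intervalIntegral.integral_const_mul]
    refine le_trans hm (le_trans (le_of_eq heval) (ENNReal.ofReal_le_ofReal ?_))
    have hcomp : ∫ z in t..(0:ℝ), (-z) ^ ((aexp n - 1)/2)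
        = ∫ s in (0:ℝ)..(-t), s ^ ((aexp n - 1)/2) := by
      rw [intervalIntegral.integral_comp_neg (fun s => s ^ ((aexp n - 1)/2))]
      norm_num
    rw [hcomp]
    have hle := int_rpow_le' (c := (0:ℝ)) (d := -t) (p := (aexp n - 1)/2)
      le_rfl (by linarith) (by rw [hA1]; linarith)
    have hexp : (aexp n - 1)/2 + 1 = (aexp n + 1)/2 := by ring
    rw [hexp] at hle
    have hden : (1:ℝ) ≤ (aexp n + 1)/2 := by unfold aexp; linarith
    have hnum : (0:ℝ) ≤ (-t) ^ ((aexp n + 1)/2) := Real.rpow_nonneg (by linarith) _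
    have hfin : (-t) ^ ((aexp n + 1)/2) / ((aexp n + 1)/2) ≤ (-t) ^ ((aexp n + 1)/2) :=
      div_le_self hnum hden
    have hI : ∫ s in (0:ℝ)..(-t), s ^ ((aexp n - 1)/2) ≤ (-t) ^ ((aexp n + 1)/2) :=
      le_trans hle hfin
    have hmerge : (-t) * (-t) ^ ((aexp n + 1)/2) = (-t) ^ ((aexp n + 3)/2) := by
      nth_rewrite 1 [← Real.rpow_one (-t)]
      rw [← Real.rpow_add (by linarith : (0:ℝ) < -t)]
      congr 1
      ring
    have h8 : (8:ℝ) ≤ (2:ℝ)^(n+5) := by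
      calc (8:ℝ) = 2^3 := by norm_num
        _ ≤ 2^(n+5) := pow_le_pow_right₀ one_le_two (by omega)
    calc (8 * (-t)) * ∫ s in (0:ℝ)..(-t), s ^ ((aexp n - 1)/2)
        ≤ (8 * (-t)) * (-t) ^ ((aexp n + 1)/2) := by
          apply mul_le_mul_of_nonneg_left hI (by linarith)
      _ = 8 * (-t) ^ ((aexp n + 3)/2) := by rw [mul_assoc, hmerge]
      _ ≤ (2:ℝ)^(n+5) * ((-t) ^ ((aexp n + 3)/2) * (1+t) ^ (-(1:ℝ)/2)) := by
          have hXnn : (0:ℝ) ≤ (-t) ^ ((aexp n + 3)/2) := Real.rpow_nonneg (by linarith) _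
          have h1 : (-t) ^ ((aexp n + 3)/2) * 1 ≤ (-t) ^ ((aexp n + 3)/2) * (1+t) ^ (-(1:ℝ)/2) :=
            mul_le_mul_of_nonneg_left hYone hXnn
          nlinarith [mul_le_mul_of_nonneg_right h8 hXnn]
  · -- t far from 0
    push_neg at htc
    have hsplit : Ioo t (0:ℝ) = Ioo t (-(1/2)) ∪ Ico (-(1/2)) 0 := by
      rw [Ioo_union_Ico_eq_Ioo htc (by norm_num)]
    have hT : ∫⁻ z in Ioo t (0:ℝ),
          ENNReal.ofReal ((z - t) * ((-z) ^ ((aexp n - 1)/2) * (1+z) ^ (-(5:ℝ)/2)))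
        ≤ (∫⁻ z in Ioo t (-(1/2):ℝ),
            ENNReal.ofReal ((z - t) * ((-z) ^ ((aexp n - 1)/2) * (1+z) ^ (-(5:ℝ)/2))))
          + ∫⁻ z in Ico (-(1/2):ℝ) 0,
            ENNReal.ofReal ((z - t) * ((-z) ^ ((aexp n - 1)/2) * (1+z) ^ (-(5:ℝ)/2))) := by
      rw [hsplit]
      exact lintegral_union_le _ _ _
    -- piece A
    have hpA : ∫⁻ z in Ioo t (-(1/2):ℝ),
          ENNReal.ofReal ((z - t) * ((-z) ^ ((aexp n - 1)/2) * (1+z) ^ (-(5:ℝ)/2)))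
        ≤ ENNReal.ofReal (2 * (1+t) ^ (-(1:ℝ)/2)) := by
      have hm : ∫⁻ z in Ioo t (-(1/2):ℝ),
            ENNReal.ofReal ((z - t) * ((-z) ^ ((aexp n - 1)/2) * (1+z) ^ (-(5:ℝ)/2)))
          ≤ ∫⁻ z in Ioo t (-(1/2):ℝ), ENNReal.ofReal ((1+z) ^ (-(3:ℝ)/2)) := by
        apply lint_mono_on measurableSet_Ioo
        intro z hz
        have hz0 : z < 0 := lt_trans hz.2 (by norm_num)
        have h1zpos : (0:ℝ) < 1 + z := by linarith [hz.1]
        have hle1 : (-z) ^ ((aexp n - 1)/2) ≤ 1 :=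
          Real.rpow_le_one (by linarith) (by linarith [hz.1, ht1]) (by rw [hA1]; linarith)
        have h5nn : (0:ℝ) ≤ (1+z) ^ (-(5:ℝ)/2) := Real.rpow_nonneg h1zpos.le _
        have hzt : z - t ≤ 1 + z := by linarith
        calc (z - t) * ((-z) ^ ((aexp n - 1)/2) * (1+z) ^ (-(5:ℝ)/2))
            ≤ (1+z) * (1 * (1+z) ^ (-(5:ℝ)/2)) := by
              apply mul_le_mul hzt (mul_le_mul_of_nonneg_right hle1 h5nn)
                (mul_nonneg (Real.rpow_nonneg (by linarith) _) h5nn) (by linarith)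
          _ = (1+z) ^ (1:ℝ) * (1+z) ^ (-(5:ℝ)/2) := by rw [Real.rpow_one]; ring
          _ = (1+z) ^ (-(3:ℝ)/2) := by
              rw [← Real.rpow_add h1zpos]
              norm_num
      have hcont : ContinuousOn (fun z : ℝ => (1+z) ^ (-(3:ℝ)/2)) (Icc t (-(1/2))) := by
        apply ContinuousOn.rpow_const ((continuous_const.add continuous_id).continuousOn)
        intro x hx
        exact Or.inl (ne_of_gt (by linarith [hx.1] : (0:ℝ) < 1 + x))
      have heval : ∫⁻ z in Ioo t (-(1/2):ℝ), ENNReal.ofReal ((1+z) ^ (-(3:ℝ)/2))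
          = ENNReal.ofReal (∫ z in t..(-(1/2):ℝ), (1+z) ^ (-(3:ℝ)/2)) := by
        rw [lint_Ioo_eq htc.le ((hcont.integrableOn_Icc).mono_set Ioo_subset_Icc_self)
          (fun x hx => Real.rpow_nonneg (by linarith [hx.1]) _)]
      refine le_trans hm (le_trans (le_of_eq heval) (ENNReal.ofReal_le_ofReal ?_))
      have hcomp : ∫ z in t..(-(1/2):ℝ), (1+z) ^ (-(3:ℝ)/2)
          = ∫ s in (t+1)..(1/2:ℝ), s ^ (-(3:ℝ)/2) := by
        have e : (fun z : ℝ => (1+z) ^ (-(3:ℝ)/2))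
            = fun z => ((fun s : ℝ => s ^ (-(3:ℝ)/2)) (z + 1)) := by
          funext z; rw [add_comm]
        rw [e, intervalIntegral.integral_comp_add_right (fun s : ℝ => s ^ (-(3:ℝ)/2)) 1]
        norm_num
      rw [hcomp]
      have hle := int_rpow_le (c := t+1) (d := 1/2) (p := -(3:ℝ)/2)
        (by linarith) (by linarith) (by norm_num)
      have : (t+1) ^ (-(3:ℝ)/2 + 1) / (-(-(3:ℝ)/2 + 1)) = 2 * (t+1) ^ (-(1:ℝ)/2) := by
        rw [show (-(3:ℝ)/2 + 1) = -(1:ℝ)/2 by norm_num]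
        rw [show (-(-(1:ℝ)/2)) = 1/2 by norm_num]
        ring
      rw [this] at hle
      rw [show (1:ℝ)+t = t+1 from by ring]
      exact hle
    -- piece B
    have hpB : ∫⁻ z in Ico (-(1/2):ℝ) 0,
          ENNReal.ofReal ((z - t) * ((-z) ^ ((aexp n - 1)/2) * (1+z) ^ (-(5:ℝ)/2)))
        ≤ ENNReal.ofReal 4 := by
      rw [Measure.restrict_congr_set Ioo_ae_eq_Ico.symm]
      have hm : ∫⁻ z in Ioo (-(1/2):ℝ) 0,
            ENNReal.ofReal ((z - t) * ((-z) ^ ((aexp n - 1)/2) * (1+z) ^ (-(5:ℝ)/2)))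
          ≤ ∫⁻ _z in Ioo (-(1/2):ℝ) 0, ENNReal.ofReal 8 := by
        apply lint_mono_on measurableSet_Ioo
        intro z hz
        have h5 : (1+z) ^ (-(5:ℝ)/2) ≤ 8 := by
          have := rpow_neg_le_pow2 (x := 1+z) (p := 5/2) (K := 3)
            (by linarith [hz.1]) (by norm_num) (by norm_num)
          have h8 : ((2:ℝ)^(3:ℕ)) = 8 := by norm_num
          rw [h8] at this
          simpa [show -((5:ℝ)/2) = -(5:ℝ)/2 by norm_num] using this
        have hle1 : (-z) ^ ((aexp n - 1)/2) ≤ 1 :=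
          Real.rpow_le_one (by linarith [hz.2]) (by linarith [hz.1]) (by rw [hA1]; linarith)
        have hzt : z - t ≤ 1 := by linarith [hz.2]
        have h5nn : (0:ℝ) ≤ (1+z) ^ (-(5:ℝ)/2) := Real.rpow_nonneg (by linarith [hz.1]) _
        calc (z - t) * ((-z) ^ ((aexp n - 1)/2) * (1+z) ^ (-(5:ℝ)/2))
            ≤ 1 * (1 * 8) := by
              apply mul_le_mul hzt
                (mul_le_mul hle1 h5 h5nn zero_le_one)
                (mul_nonneg (Real.rpow_nonneg (by linarith [hz.2]) _) h5nn) zero_le_one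
          _ = 8 := by norm_num
      refine le_trans hm ?_
      rw [setLIntegral_const]
      rw [Real.volume_Ioo]
      rw [show (0:ℝ) - (-(1/2)) = 1/2 from by norm_num]
      rw [← ENNReal.ofReal_mul (by norm_num)]
      norm_num
    -- combine
    have hX2 : ((1:ℝ)/2)^(n+1) ≤ (-t) ^ ((aexp n + 3)/2) := by
      calc ((1:ℝ)/2)^(n+1) = ((1:ℝ)/2) ^ (((n+1 : ℕ)):ℝ) := (Real.rpow_natCast _ _).symm
        _ ≤ ((1:ℝ)/2) ^ ((aexp n + 3)/2) := by
            apply Real.rpow_le_rpow_of_exponent_ge (by norm_num) (by norm_num)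
            rw [hA3]; push_cast; linarith
        _ ≤ (-t) ^ ((aexp n + 3)/2) :=
            Real.rpow_le_rpow (by norm_num) (by linarith) (by rw [hA3]; linarith)
    calc ∫⁻ z in Ioo t (0:ℝ),
          ENNReal.ofReal ((z - t) * ((-z) ^ ((aexp n - 1)/2) * (1+z) ^ (-(5:ℝ)/2)))
        ≤ ENNReal.ofReal (2 * (1+t) ^ (-(1:ℝ)/2)) + ENNReal.ofReal 4 :=
          le_trans hT (add_le_add hpA hpB)
      _ = ENNReal.ofReal (2 * (1+t) ^ (-(1:ℝ)/2) + 4) := by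
          rw [← ENNReal.ofReal_add (by positivity) (by norm_num)]
      _ ≤ ENNReal.ofReal ((2:ℝ)^(n+5) * ((-t) ^ ((aexp n + 3)/2) * (1+t) ^ (-(1:ℝ)/2))) := by
          apply ENNReal.ofReal_le_ofReal
          set X := (-t) ^ ((aexp n + 3)/2)
          set Y := (1+t) ^ (-(1:ℝ)/2)
          have h16 : (2:ℝ)^(n+5) * ((1/2:ℝ)^(n+1) * Y) = 16 * Y := by
            have h2n : ((1:ℝ)/2)^(n+1) = ((2:ℝ)^(n+1))⁻¹ := by
              rw [one_div, inv_pow]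
            rw [h2n, show n+5 = (n+1)+4 from by omega, pow_add]
            have hne : ((2:ℝ)^(n+1)) ≠ 0 := by positivity
            field_simp
            ring
          have hstep : (2:ℝ)^(n+5) * ((1/2:ℝ)^(n+1) * Y) ≤ (2:ℝ)^(n+5) * (X * Y) := by
            apply mul_le_mul_of_nonneg_left
              (mul_le_mul_of_nonneg_right hX2 hYnn) (by positivity)
          rw [h16] at hstep
          linarith
  
lemma cond_ii (n : ℕ) (hn : 2 ≤ n) (t : ℝ) :
    ∫⁻ z, ker n z t * hfun z ≤ ENNReal.ofReal ((2:ℝ)^(n+6)) * hfun t := by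
  by_cases ht : -1 < t ∧ t < 0
  · obtain ⟨ht1, ht2⟩ := ht
    have hbnn : (0:ℝ) ≤ (-t) ^ (-(bexp n/2)) := Real.rpow_nonneg (by linarith) _
    have hindicator : ∀ z, ker n z t * hfun z
        = (Ioo t (0:ℝ)).indicator (fun z => ENNReal.ofReal ((-t) ^ (-(bexp n/2))) *
            ENNReal.ofReal ((z - t) * ((-z) ^ ((aexp n - 1)/2) * (1+z) ^ (-(5:ℝ)/2)))) z := by
      intro z
      by_cases hz : z ∈ Ioo t (0:ℝ)
      · rw [indicator_of_mem hz]
        obtain ⟨hz1, hz2⟩ := hz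
        have hz1' : -1 < z := lt_trans ht1 hz1
        have h1z : (0:ℝ) < 1 + z := by linarith
        have hmz : (0:ℝ) < -z := by linarith
        unfold ker hfun
        rw [if_pos ⟨ht1, hz1, hz2⟩, if_pos ⟨hz1', hz2⟩]
        rw [← ENNReal.ofReal_mul (mul_nonneg (Wf_nonneg n hz2)
          (mul_nonneg (by linarith : (0:ℝ) ≤ z - t) hbnn)),
          ← ENNReal.ofReal_mul hbnn]
        congr 1
        have hm1 : (-z) ^ (aexp n/2) * (-z) ^ (-(1:ℝ)/2) = (-z) ^ ((aexp n - 1)/2) := by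
          rw [← Real.rpow_add hmz]
          congr 1
          ring
        have hm2 : ((z+1)^2)⁻¹ * (1+z) ^ (-(1:ℝ)/2) = (1+z) ^ (-(5:ℝ)/2) := by
          rw [show z+1 = 1+z from by ring, ← Real.rpow_natCast (1+z) 2,
            ← Real.rpow_neg h1z.le, ← Real.rpow_add h1z]
          norm_num
        calc Wf n z * ((z - t) * (-t) ^ (-(bexp n/2)))
              * ((1+z) ^ (-(1:ℝ)/2) * (-z) ^ (-(1:ℝ)/2))
            = (-t) ^ (-(bexp n/2)) * ((z - t) *
                (((-z) ^ (aexp n/2) * (-z) ^ (-(1:ℝ)/2))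
                  * (((z+1)^2)⁻¹ * (1+z) ^ (-(1:ℝ)/2)))) := by unfold Wf; ring
          _ = (-t) ^ (-(bexp n/2)) * ((z - t) *
                ((-z) ^ ((aexp n - 1)/2) * (1+z) ^ (-(5:ℝ)/2))) := by rw [hm1, hm2]
      · rw [indicator_of_notMem hz]
        have hk : ker n z t = 0 := by
          unfold ker
          rw [if_neg]
          rintro ⟨_, h2, h3⟩
          exact hz ⟨h2, h3⟩
        rw [hk, zero_mul]
    rw [lintegral_congr hindicator, lintegral_indicator measurableSet_Ioo _,
      lintegral_const_mul' _ _ ENNReal.ofReal_ne_top]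
    have hS := cond_ii_S n hn ht1 ht2
    calc ENNReal.ofReal ((-t) ^ (-(bexp n/2))) * ∫⁻ z in Ioo t (0:ℝ),
          ENNReal.ofReal ((z - t) * ((-z) ^ ((aexp n - 1)/2) * (1+z) ^ (-(5:ℝ)/2)))
        ≤ ENNReal.ofReal ((-t) ^ (-(bexp n/2))) * ENNReal.ofReal ((2:ℝ)^(n+5) *
            ((-t) ^ ((aexp n + 3)/2) * (1+t) ^ (-(1:ℝ)/2))) := mul_le_mul' le_rfl hS
      _ = ENNReal.ofReal ((2:ℝ)^(n+5) * ((1+t) ^ (-(1:ℝ)/2) * (-t) ^ (-(1:ℝ)/2))) := by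
          rw [← ENNReal.ofReal_mul hbnn]
          congr 1
          have hmt : (-t) ^ (-(bexp n/2)) * (-t) ^ ((aexp n + 3)/2) = (-t) ^ (-(1:ℝ)/2) := by
            rw [← Real.rpow_add (by linarith : (0:ℝ) < -t)]
            congr 1
            unfold aexp bexp
            ring
          calc (-t) ^ (-(bexp n/2)) * ((2:ℝ)^(n+5) *
                ((-t) ^ ((aexp n + 3)/2) * (1+t) ^ (-(1:ℝ)/2)))
              = (2:ℝ)^(n+5) * (((-t) ^ (-(bexp n/2)) * (-t) ^ ((aexp n + 3)/2))
                  * (1+t) ^ (-(1:ℝ)/2)) := by ring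
            _ = (2:ℝ)^(n+5) * ((1+t) ^ (-(1:ℝ)/2) * (-t) ^ (-(1:ℝ)/2)) := by
                rw [hmt]; ring
      _ ≤ ENNReal.ofReal ((2:ℝ)^(n+6)) * hfun t := by
          unfold hfun
          rw [if_pos ⟨ht1, ht2⟩, ← ENNReal.ofReal_mul (by positivity)]
          apply ENNReal.ofReal_le_ofReal
          have hh : (0:ℝ) ≤ (1+t) ^ (-(1:ℝ)/2) * (-t) ^ (-(1:ℝ)/2) :=
            mul_nonneg (Real.rpow_nonneg (by linarith) _) (Real.rpow_nonneg (by linarith) _)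
          apply mul_le_mul_of_nonneg_right _ hh
          exact pow_le_pow_right₀ one_le_two (by omega)
  · have h0 : ∫⁻ z, ker n z t * hfun z = 0 := by
      simp only [ker_eq_zero_right ht, zero_mul, lintegral_zero]
    rw [h0]
    exact zero_le


lemma f_inner_eq (n : ℕ) {F : ℝ → ℝ} (hF : ContinuousOn F (Icc (-1) 0)) {z : ℝ}
    (hz : z ∈ Ioo (-1:ℝ) 0) :
    ∫⁻ t, ker n z t * (Ioo (-1:ℝ) 0).indicator
        (fun t => ENNReal.ofReal ((-t) ^ (bexp n/2) * |F t|)) t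
      = ENNReal.ofReal (Wf n z * ∫ t in (-1:ℝ)..z, |F t| * (z - t)) := by
  obtain ⟨hz1, hz2⟩ := hz
  have hW : 0 ≤ Wf n z := Wf_nonneg n hz2
  have hpt : ∀ t, ker n z t * (Ioo (-1:ℝ) 0).indicator
        (fun t => ENNReal.ofReal ((-t) ^ (bexp n/2) * |F t|)) t
      = (Ioo (-1:ℝ) z).indicator
          (fun t => ENNReal.ofReal (Wf n z) * ENNReal.ofReal (|F t| * (z - t))) t := by
    intro t
    by_cases ht : t ∈ Ioo (-1:ℝ) z
    · rw [indicator_of_mem ht, indicator_of_mem (show t ∈ Ioo (-1:ℝ) 0 from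
        ⟨ht.1, lt_trans ht.2 hz2⟩)]
      obtain ⟨ht1, ht2⟩ := ht
      have htz : (0:ℝ) < -t := by linarith [lt_trans ht2 hz2]
      unfold ker
      rw [if_pos ⟨ht1, ht2, hz2⟩]
      rw [← ENNReal.ofReal_mul (mul_nonneg hW (mul_nonneg (by linarith : (0:ℝ) ≤ z - t)
        (Real.rpow_nonneg htz.le _))), ← ENNReal.ofReal_mul hW]
      congr 1
      have hcancel : (-t) ^ (-(bexp n/2)) * (-t) ^ (bexp n/2) = 1 := by
        rw [← Real.rpow_add htz]
        norm_num
      calc Wf n z * ((z - t) * (-t) ^ (-(bexp n/2))) * ((-t) ^ (bexp n/2) * |F t|)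
          = Wf n z * (|F t| * (z - t)) * ((-t) ^ (-(bexp n/2)) * (-t) ^ (bexp n/2)) := by
            ring
        _ = Wf n z * (|F t| * (z - t)) := by rw [hcancel, mul_one]
    · rw [indicator_of_notMem ht]
      have hk : ker n z t = 0 := by
        unfold ker
        rw [if_neg]
        rintro ⟨h1, h2, _⟩
        exact ht ⟨h1, h2⟩
      rw [hk, zero_mul]
  rw [lintegral_congr hpt, lintegral_indicator measurableSet_Ioo _,
    lintegral_const_mul' _ _ ENNReal.ofReal_ne_top]
  have hint : IntegrableOn (fun t => |F t| * (z - t)) (Ioo (-1:ℝ) z) := by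
    have h1 : IntervalIntegrable (fun t => |F t| * (z - t) ^ 1) volume (-1) z :=
      contOn_mul_pow (F := fun t => |F t|) hF.abs ⟨hz1.le, hz2.le⟩ _
        ((continuous_const.sub continuous_id).pow 1)
    simp only [pow_one] at h1
    exact h1.1.mono_set Ioo_subset_Ioc_self
  rw [lint_Ioo_eq hz1.le hint
    (fun x hx => mul_nonneg (abs_nonneg _) (by linarith [hx.2]))]
  rw [← ENNReal.ofReal_mul hW]

lemma f_aemeasurable (n : ℕ) {F : ℝ → ℝ} (hF : ContinuousOn F (Icc (-1) 0)) :
    AEMeasurable ((Ioo (-1:ℝ) 0).indicator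
      (fun t => ENNReal.ofReal ((-t) ^ (bexp n/2) * |F t|))) volume := by
  apply (aemeasurable_indicator_iff measurableSet_Ioo).mpr
  apply ENNReal.measurable_ofReal.comp_aemeasurable
  apply AEMeasurable.mul
  · exact (measurable_id.neg.pow_const _).aemeasurable
  · exact ((hF.mono Ioo_subset_Icc_self).abs.aemeasurable measurableSet_Ioo)

lemma f_sq_integral (n : ℕ) (F : ℝ → ℝ) :
    ∫⁻ t, ((Ioo (-1:ℝ) 0).indicator
        (fun t => ENNReal.ofReal ((-t) ^ (bexp n/2) * |F t|)) t) ^ 2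
      = ∫⁻ t in Ioo (-1:ℝ) 0, ENNReal.ofReal ((-t) ^ (bexp n) * (F t) ^ 2) := by
  have hpt : ∀ t, ((Ioo (-1:ℝ) 0).indicator
        (fun t => ENNReal.ofReal ((-t) ^ (bexp n/2) * |F t|)) t) ^ 2
      = (Ioo (-1:ℝ) 0).indicator
          (fun t => ENNReal.ofReal ((-t) ^ (bexp n) * (F t) ^ 2)) t := by
    intro t
    by_cases ht : t ∈ Ioo (-1:ℝ) 0
    · rw [indicator_of_mem ht, indicator_of_mem ht]
      have htz : (0:ℝ) < -t := by linarith [ht.2]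
      rw [← ENNReal.ofReal_pow (mul_nonneg (Real.rpow_nonneg htz.le _) (abs_nonneg _))]
      congr 1
      rw [mul_pow, ← Real.rpow_natCast ((-t) ^ (bexp n/2)) 2, ← Real.rpow_mul htz.le,
        sq_abs]
      norm_num
    · rw [indicator_of_notMem ht, indicator_of_notMem ht]
      simp
  rw [lintegral_congr hpt, lintegral_indicator measurableSet_Ioo _]

/-- The "Taylor expansion estimate" from the proof of Proposition 4.7: for every
integer `n ≥ 2` there is `C = C(n) > 0` such that for every continuous
`F : [-1,0] → ℝ`,
`∫ (-z)^(2(n-1)-1/2) (dⁿ/dzⁿ [(z+1)⁻² ∫_{-1}^z F(z')(z-z')^(n+1) dz'])² dz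
  ≤ C ∫ (-z)^(2(n+1)-1/2) F(z)² dz`. -/
theorem taylor_remainder_weighted_L2 (n : ℕ) (hn : 2 ≤ n) :
    ∃ C > 0, ∀ F : ℝ → ℝ, ContinuousOn F (Icc (-1) 0) →
      (∫⁻ z in Ioo (-1 : ℝ) 0,
          ENNReal.ofReal ((-z) ^ (2 * ((n : ℝ) - 1) - 1/2) *
            (iteratedDeriv n
              (fun w => ((w + 1) ^ 2)⁻¹ * ∫ t in (-1 : ℝ)..w, F t * (w - t) ^ (n + 1))
              z) ^ 2))
        ≤ ENNReal.ofReal C *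
            ∫⁻ z in Ioo (-1 : ℝ) 0,
              ENNReal.ofReal ((-z) ^ (2 * ((n : ℝ) + 1) - 1/2) * (F z) ^ 2) := by
  set Kn : ℝ := ((n:ℝ)+1) * (2*(n:ℝ)+4) ^ n with hKn
  have hKnpos : 0 < Kn := by positivity
  set A2 : ℝ := (2:ℝ)^(n+6) with hA2
  have hA2pos : 0 < A2 := by positivity
  refine ⟨(Kn * A2)^2, by positivity, ?_⟩
  intro F hF
  set f : ℝ → ℝ≥0∞ := (Ioo (-1:ℝ) 0).indicator
    (fun t => ENNReal.ofReal ((-t) ^ (bexp n/2) * |F t|)) with hfdef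
  -- pointwise estimate
  have hpoint : ∀ z ∈ Ioo (-1:ℝ) 0,
      ENNReal.ofReal ((-z) ^ (2 * ((n : ℝ) - 1) - 1/2) *
          (iteratedDeriv n (Gfun F n) z) ^ 2)
        ≤ (ENNReal.ofReal Kn) ^ 2 * (∫⁻ t, ker n z t * f t) ^ 2 := by
    intro z hz
    obtain ⟨hz1, hz2⟩ := hz
    have hmz : (0:ℝ) < -z := by linarith
    set L := ∫ t in (-1:ℝ)..z, |F t| * (z - t) with hL
    have hL0 : 0 ≤ L := by
      apply intervalIntegral.integral_nonneg hz1.le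
      intro t ht
      exact mul_nonneg (abs_nonneg _) (by linarith [ht.2])
    have hDbound := pointwise_bound hF n (show z ∈ Ioo (-1:ℝ) 0 from ⟨hz1, hz2⟩)
    rw [f_inner_eq n hF ⟨hz1, hz2⟩]
    have hWL : 0 ≤ Wf n z * L := mul_nonneg (Wf_nonneg n hz2) hL0
    rw [← ENNReal.ofReal_pow hKnpos.le, ← ENNReal.ofReal_pow hWL,
      ← ENNReal.ofReal_mul (by positivity)]
    apply ENNReal.ofReal_le_ofReal
    have hsq : (iteratedDeriv n (Gfun F n) z) ^ 2 ≤ (Kn * (((z+1)^2)⁻¹ * L)) ^ 2 := by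
      rw [← sq_abs (iteratedDeriv n (Gfun F n) z)]
      apply pow_le_pow_left₀ (abs_nonneg _)
      exact hDbound
    have hasq : ((-z) ^ ((aexp n)/2)) ^ 2 = (-z) ^ (aexp n) := by
      rw [← Real.rpow_natCast ((-z) ^ (aexp n/2)) 2, ← Real.rpow_mul hmz.le]
      norm_num
    have hexpand : Kn ^ 2 * (Wf n z * L) ^ 2
        = (-z) ^ (aexp n) * (Kn * (((z+1)^2)⁻¹ * L)) ^ 2 := by
      rw [← hasq]
      unfold Wf
      ring
    calc (-z) ^ (2 * ((n : ℝ) - 1) - 1/2) * (iteratedDeriv n (Gfun F n) z) ^ 2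
        ≤ (-z) ^ (2 * ((n : ℝ) - 1) - 1/2) * (Kn * (((z+1)^2)⁻¹ * L)) ^ 2 := by
          apply mul_le_mul_of_nonneg_left hsq (Real.rpow_nonneg hmz.le _)
      _ = Kn ^ 2 * (Wf n z * L) ^ 2 := by rw [hexpand]; rfl
  -- integrate and apply Schur
  have hSchur := schur_test (ker_measurable n) hfun_measurable hfun_ne_zero hfun_ne_top
    (show ENNReal.ofReal A2 ≠ ⊤ from ENNReal.ofReal_ne_top) (cond_i n hn) (cond_ii n hn) (f_aemeasurable n hF)
  calc ∫⁻ z in Ioo (-1 : ℝ) 0,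
        ENNReal.ofReal ((-z) ^ (2 * ((n : ℝ) - 1) - 1/2) *
          (iteratedDeriv n
            (fun w => ((w + 1) ^ 2)⁻¹ * ∫ t in (-1 : ℝ)..w, F t * (w - t) ^ (n + 1)) z) ^ 2)
      ≤ ∫⁻ z in Ioo (-1 : ℝ) 0,
          (ENNReal.ofReal Kn) ^ 2 * (∫⁻ t, ker n z t * f t) ^ 2 := by
        apply lintegral_mono_ae
        filter_upwards [ae_restrict_mem measurableSet_Ioo] with z hz
        exact hpoint z hz
    _ = (ENNReal.ofReal Kn) ^ 2 * ∫⁻ z in Ioo (-1 : ℝ) 0, (∫⁻ t, ker n z t * f t) ^ 2 := by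
        rw [lintegral_const_mul' _ _ (by simp [ENNReal.pow_ne_top ENNReal.ofReal_ne_top])]
    _ ≤ (ENNReal.ofReal Kn) ^ 2 * ∫⁻ z, (∫⁻ t, ker n z t * f t) ^ 2 :=
        mul_le_mul' le_rfl (setLIntegral_le_lintegral _ _)
    _ ≤ (ENNReal.ofReal Kn) ^ 2 * ((ENNReal.ofReal A2) ^ 2 * ∫⁻ t, f t ^ 2) :=
        mul_le_mul' le_rfl hSchur
    _ = ENNReal.ofReal ((Kn * A2)^2) *
          ∫⁻ z in Ioo (-1 : ℝ) 0, ENNReal.ofReal ((-z) ^ (bexp n) * (F z) ^ 2) := by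
        rw [hfdef, f_sq_integral n F, ← mul_assoc]
        congr 1
        rw [← ENNReal.ofReal_pow hKnpos.le, ← ENNReal.ofReal_pow hA2pos.le,
          ← ENNReal.ofReal_mul (by positivity)]
        congr 1
        ring
    _ = ENNReal.ofReal ((Kn * A2)^2) *
          ∫⁻ z in Ioo (-1 : ℝ) 0,
            ENNReal.ofReal ((-z) ^ (2 * ((n : ℝ) + 1) - 1/2) * (F z) ^ 2) := rfl
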